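/- For every integer τ with −8 ≤ τ ≤ 8, the quadratic form q_τ(x,y,z) = 3x² + 7y² + 13z² + 2xy + 2xz + 2τyz satisfies q_τ(x,y,z) ≥ 3 for all (x,y,z) ∈ ℤ³ with (x,y,z) ≠ (0,0,0) (in particular q_τ is positive definite and the associated lattice has no roots), while q₉(0,−1,1) = 2. -/

import Mathlib

/-!
Write `q_τ = x² + (x + y)² + (x + z)² + (6y² + 2τyz + 12z²)`. The three squares contribute at
least `1` unless `x = y = z = 0`, and for `|τ| ≤ 8` the binary part is at least `2` off the origin:
it dominates `6a² - 16ab + 12b²` for `(a, b) = (y, ±z)`, and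
`9 (6a² - 16ab + 12b²) = 6 (3a - 4b)² + 12b²`. If `y = z = 0`, then `q_τ = 3x²`.
-/

lemma Int.one_le_sq_of_ne_zero {a : ℤ} (h : a ≠ 0) : 1 ≤ a ^ 2 :=
  (one_le_sq_iff_one_le_abs a).mpr (Int.one_le_abs h)

lemma two_le_six_sq_sub_sixteen_mul_add_twelve_sq {a b : ℤ} (h : ¬ (a = 0 ∧ b = 0)) :
    2 ≤ 6 * a ^ 2 - 16 * a * b + 12 * b ^ 2 := by
  have key : 9 * (6 * a ^ 2 - 16 * a * b + 12 * b ^ 2) = 6 * (3 * a - 4 * b) ^ 2 + 12 * b ^ 2 := by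
    ring
  by_cases hb : b = 0
  · subst hb
    have ha : a ≠ 0 := fun ha => h ⟨ha, rfl⟩
    nlinarith [Int.one_le_sq_of_ne_zero ha]
  by_cases hab : 3 * a = 4 * b
  · obtain ⟨k, rfl⟩ : 3 ∣ b := by omega
    have hk : k ≠ 0 := by omega
    nlinarith [Int.one_le_sq_of_ne_zero hk]
  · nlinarith [Int.one_le_sq_of_ne_zero hb, Int.one_le_sq_of_ne_zero (sub_ne_zero.mpr hab)]

lemma two_le_binary_form {τ y z : ℤ} (hτ : |τ| ≤ 8) (h : ¬ (y = 0 ∧ z = 0)) :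
    2 ≤ 6 * y ^ 2 + 12 * z ^ 2 + 2 * τ * y * z := by
  rw [abs_le] at hτ
  rcases le_total 0 (y * z) with hyz | hyz
  · have := two_le_six_sq_sub_sixteen_mul_add_twelve_sq h
    nlinarith
  · have := two_le_six_sq_sub_sixteen_mul_add_twelve_sq (a := y) (b := -z) (by simpa using h)
    nlinarith

lemma three_le_q_tau {τ x y z : ℤ} (hτ : |τ| ≤ 8) (h : ¬ (x = 0 ∧ y = 0 ∧ z = 0)) :
    3 ≤ 3 * x ^ 2 + 7 * y ^ 2 + 13 * z ^ 2 + 2 * x * y + 2 * x * z + 2 * τ * y * z := by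
  have key : 3 * x ^ 2 + 7 * y ^ 2 + 13 * z ^ 2 + 2 * x * y + 2 * x * z + 2 * τ * y * z
      = x ^ 2 + (x + y) ^ 2 + (x + z) ^ 2 + (6 * y ^ 2 + 12 * z ^ 2 + 2 * τ * y * z) := by
    ring
  by_cases hyz : y = 0 ∧ z = 0
  · obtain ⟨rfl, rfl⟩ := hyz
    have hx : x ≠ 0 := fun hx => h ⟨hx, rfl, rfl⟩
    nlinarith [Int.one_le_sq_of_ne_zero hx]
  · have hsum : 1 ≤ x ^ 2 + (x + y) ^ 2 + (x + z) ^ 2 := by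
      by_cases hx : x = 0
      · subst hx
        rcases not_and_or.mp hyz with hy | hz
        · nlinarith [Int.one_le_sq_of_ne_zero hy, sq_nonneg z]
        · nlinarith [Int.one_le_sq_of_ne_zero hz, sq_nonneg y]
      · nlinarith [Int.one_le_sq_of_ne_zero hx, sq_nonneg (x + y), sq_nonneg (x + z)]
    linarith [two_le_binary_form hτ hyz]

theorem q_tau_min_three_and_q_nine_root :
    (∀ τ : ℤ, -8 ≤ τ → τ ≤ 8 → ∀ x y z : ℤ, ¬ (x = 0 ∧ y = 0 ∧ z = 0) →
      3 ≤ 3 * x ^ 2 + 7 * y ^ 2 + 13 * z ^ 2 + 2 * x * y + 2 * x * z + 2 * τ * y * z) ∧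
    (3 * (0 : ℤ) ^ 2 + 7 * (-1 : ℤ) ^ 2 + 13 * (1 : ℤ) ^ 2 + 2 * 0 * (-1) + 2 * 0 * 1 +
      2 * 9 * (-1) * 1 = 2) :=
  ⟨fun _ hlo hhi _ _ _ h => three_le_q_tau (abs_le.mpr ⟨hlo, hhi⟩) h, by norm_num⟩
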